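/- arXiv:1705.08553 — 4 statements merged into one kernel-verified Lean document; each statement's English description precedes it below -/
import Mathlib

section
/- Martingale method: Suppose Assumptions (i)–(iii) hold for the sequence H_0 = 0 ≤ H_1 ≤ ⋯ ≤ H_N described below. Then for every ψ ∈ ℋ with G_N ψ = 0, one has ⟨ψ, H_N ψ⟩ ≥ γ (1 − ε√(1+ℓ))² ‖ψ‖². -/
/-!
Since `G 0 = 1` and `G N ψ = 0`, telescoping gives `ψ = ∑_{n<N} E n ψ`, a sum of orthogonal
vectors. Split `‖E n ψ‖² = ⟪(1 - g (n+1)) ψ, E n ψ⟫ + ⟪ψ, g (n+1) (E n ψ)⟫`. By (ii), `E k` commutes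
with `g (n+1)` outside the window `n - ℓ ≤ k ≤ n`, so only the components `E k ψ` in that window
contribute to the second term, and by (iii) `‖g (n+1) (E n ψ)‖ ≤ ε ‖E n ψ‖`. Summing over `n` with
Cauchy–Schwarz, each `k` lying in at most `ℓ + 1` windows, gives
`(1 - ε √(ℓ+1)) ‖ψ‖ ≤ (∑_n ‖(1 - g (n+1)) ψ‖²)^(1/2)`, and by (i) `γ` times the square of the
right-hand side is at most `⟪ψ, H_N ψ⟫`.
-/

open RCLike ContinuousLinearMap Finset
open scoped InnerProductSpace

theorem sq_le_sq_of_sq_le_mul_add_mul {x y c : ℝ} (hx : 0 ≤ x) (hc : c < 1)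
    (h : x ^ 2 ≤ y * x + c * x ^ 2) : ((1 - c) * x) ^ 2 ≤ y ^ 2 := by
  rcases hx.eq_or_lt with rfl | hx
  · simpa using sq_nonneg y
  · have hle : (1 - c) * x ≤ y := le_of_mul_le_mul_right (by nlinarith) hx
    exact pow_le_pow_left₀ (by nlinarith) hle 2

theorem sum_range_sum_Icc_sub_le {f : ℕ → ℝ} (hf : ∀ k, 0 ≤ f k) (N ℓ : ℕ) :
    ∑ n ∈ range N, ∑ k ∈ Icc (n - ℓ) n, f k ≤ (ℓ + 1) * ∑ k ∈ range N, f k := by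
  rw [sum_comm' (t' := range N) (s' := fun k => Icc k (k + ℓ) ∩ range N)
    (fun n k => by simp only [mem_range, mem_Icc, mem_inter]; omega), mul_sum]
  refine sum_le_sum fun k _ => ?_
  rw [sum_const, nsmul_eq_mul]
  gcongr
  · exact hf k
  · have : #(Icc k (k + ℓ) ∩ range N) ≤ ℓ + 1 :=
      (card_le_card inter_subset_left).trans (by simp; omega)
    exact_mod_cast this

theorem IsSelfAdjoint.sub_succ_mul_sub_succ {R : Type*} [Ring R] [StarRing R] {G : ℕ → R}
    {N : ℕ} (hsa : ∀ n ≤ N, IsSelfAdjoint (G n))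
    (hG : ∀ m n, m ≤ n → n ≤ N → G m * G n = G n) {k n : ℕ} (hk : k < N) (hn : n < N) :
    (G k - G (k + 1)) * (G n - G (n + 1)) = if k = n then G n - G (n + 1) else 0 := by
  have hG' : ∀ m n, m ≤ n → n ≤ N → G n * G m = G n := fun m n hmn hn => by
    simpa [(hsa m (hmn.trans hn)).star_eq, (hsa n hn).star_eq] using congr(star $(hG m n hmn hn))
  simp only [sub_mul, mul_sub]
  rcases lt_trichotomy k n with hlt | rfl | hgt
  · rw [hG k n (by omega) (by omega), hG k (n + 1) (by omega) (by omega),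
      hG (k + 1) n (by omega) (by omega), hG (k + 1) (n + 1) (by omega) (by omega),
      if_neg hlt.ne]
    abel
  · rw [hG k k le_rfl (by omega), hG k (k + 1) (by omega) (by omega),
      hG' k (k + 1) (by omega) (by omega), hG (k + 1) (k + 1) le_rfl (by omega), if_pos rfl]
    abel
  · rw [hG' n k (by omega) (by omega), hG' (n + 1) k (by omega) (by omega),
      hG' n (k + 1) (by omega) (by omega), hG' (n + 1) (k + 1) (by omega) (by omega),
      if_neg hgt.ne']
    abel

section HilbertSpace

variable {H : Type*} [NormedAddCommGroup H] [InnerProductSpace ℂ H] [CompleteSpace H]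

namespace ContinuousLinearMap

theorem IsPositive.apply_eq_zero_of_re_inner_eq_zero {T : H →L[ℂ] H} (hT : T.IsPositive)
    {x : H} (hx : re ⟪x, T x⟫_ℂ = 0) : T x = 0 := by
  set s := CFC.sqrt T
  have hss : s * s = T := CFC.sqrt_mul_sqrt_self T ((nonneg_iff_isPositive T).mpr hT)
  have hs : IsSelfAdjoint s := (CFC.sqrt_nonneg T).isSelfAdjoint
  have hsx : ‖s x‖ ^ 2 = 0 := by
    rw [← hx, ← hss, mul_apply_eq_comp, ← hs.isSymmetric.apply_clm, inner_self_eq_norm_sq]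
  rw [← hss, mul_apply_eq_comp, norm_eq_zero.mp (pow_eq_zero_iff two_ne_zero |>.mp hsx),
    map_zero]

theorem IsPositive.sum_apply_eq_zero_of_subset {ι : Type*} {T : ι → H →L[ℂ] H} {s t : Finset ι}
    (hT : ∀ i ∈ t, (T i).IsPositive) (hst : s ⊆ t) {x : H} (hx : (∑ i ∈ t, T i) x = 0) :
    (∑ i ∈ s, T i) x = 0 := by
  have hsum : ∑ i ∈ t, re ⟪x, T i x⟫_ℂ = 0 := by
    simpa only [_root_.sum_apply, inner_sum, map_sum, inner_zero_right, map_zero]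
      using congr(re ⟪x, $hx⟫_ℂ)
  have hzero := (sum_eq_zero_iff_of_nonneg fun i hi => (hT i hi).re_inner_nonneg_right x).mp hsum
  rw [_root_.sum_apply]
  exact sum_eq_zero fun i hi => (hT i (hst hi)).apply_eq_zero_of_re_inner_eq_zero (hzero i (hst hi))

end ContinuousLinearMap

theorem kerProjection_mul_of_le {h G : ℕ → H →L[ℂ] H} {N : ℕ}
    (hpos : ∀ n, 1 ≤ n → n ≤ N → (h n).IsPositive)
    (hG : ∀ n ≤ N, G n ∘L G n = G n ∧ ∀ x, G n x = x ↔ (∑ k ∈ Icc 1 n, h k) x = 0)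
    {m n : ℕ} (hmn : m ≤ n) (hn : n ≤ N) : G m * G n = G n := by
  ext x
  rw [mul_apply_eq_comp, (hG m (hmn.trans hn)).2]
  have hfix : G n (G n x) = G n x := congr($((hG n hn).1) x)
  refine IsPositive.sum_apply_eq_zero_of_subset (fun k hk => ?_) (Icc_subset_Icc_right hmn)
    (((hG n hn).2 _).mp hfix)
  rw [mem_Icc] at hk
  exact hpos k hk.1 (hk.2.trans hn)

theorem resolution_of_kerProjections {h G E : ℕ → H →L[ℂ] H} {N : ℕ}
    (hpos : ∀ n, 1 ≤ n → n ≤ N → (h n).IsPositive)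
    (hG : ∀ n ≤ N, IsSelfAdjoint (G n) ∧ G n ∘L G n = G n ∧
      ∀ x, G n x = x ↔ (∑ k ∈ Icc 1 n, h k) x = 0)
    (hE0 : E 0 = 1 - G 1) (hEmid : ∀ n, 1 ≤ n → n ≤ N - 1 → E n = G n - G (n + 1)) :
    (∀ n < N, IsStarProjection (E n)) ∧
      (∀ k < N, ∀ n < N, E k * E n = if k = n then E n else 0) ∧
      ∀ x, G N x = 0 → ∑ n ∈ range N, E n x = x := by
  have hG0 : G 0 = 1 := by
    ext x
    simpa using ((hG 0 (Nat.zero_le N)).2.2 x).mpr (by simp)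
  have hEG : ∀ n < N, E n = G n - G (n + 1) := fun n hn => by
    rcases n.eq_zero_or_pos with rfl | hn0
    · rw [hE0, hG0]
    · exact hEmid n hn0 (by omega)
  have hEE : ∀ k < N, ∀ n < N, E k * E n = if k = n then E n else 0 := fun k hk n hn => by
    rw [hEG k hk, hEG n hn]
    exact IsSelfAdjoint.sub_succ_mul_sub_succ (fun n hn => (hG n hn).1)
      (fun _ _ => kerProjection_mul_of_le hpos fun n hn => (hG n hn).2) hk hn
  have hEproj : ∀ n < N, IsStarProjection (E n) := fun n hn =>
    ⟨(hEE n hn n hn).trans (if_pos rfl),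
      hEG n hn ▸ (hG n (by omega)).1.sub (hG (n + 1) hn).1⟩
  refine ⟨hEproj, hEE, fun x hx => ?_⟩
  rw [sum_congr rfl fun n hn => by rw [hEG n (mem_range.mp hn), sub_apply], sum_range_sub',
    hx, hG0, one_apply_eq_self, sub_zero]

theorem IsStarProjection.re_inner_apply_self {p : H →L[ℂ] H} (hp : IsStarProjection p) (x : H) :
    re ⟪x, p x⟫_ℂ = ‖p x‖ ^ 2 := by
  conv_lhs => rw [← hp.isIdempotentElem.eq, mul_apply_eq_comp,
    ← hp.isSelfAdjoint.isSymmetric.apply_clm, inner_self_eq_norm_sq]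

theorem IsStarProjection.mul_sq_norm_sub_apply_le {T p : H →L[ℂ] H} (hp : IsStarProjection p)
    {γ : ℝ} (h : (T - γ • (1 - p)).IsPositive) (x : H) :
    γ * ‖x - p x‖ ^ 2 ≤ re ⟪x, T x⟫_ℂ := by
  have h0 := h.re_inner_nonneg_right x
  rw [sub_apply, smul_apply, real_smul_eq_coe_smul (K := ℂ), inner_sub_right, inner_smul_right,
    map_sub, re_ofReal_mul, hp.one_sub.re_inner_apply_self] at h0
  simpa using h0

theorem mul_sum_sq_norm_sub_apply_le {h g : ℕ → H →L[ℂ] H} {N : ℕ} {γ : ℝ}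
    (hg : ∀ n, 1 ≤ n → n ≤ N → IsStarProjection (g n))
    (hh : ∀ n, 1 ≤ n → n ≤ N → (h n - γ • (1 - g n)).IsPositive) (x : H) :
    γ * ∑ n ∈ range N, ‖x - g (n + 1) x‖ ^ 2 ≤ re ⟪x, (∑ k ∈ Icc 1 N, h k) x⟫_ℂ := by
  rw [← Ico_add_one_right_eq_Icc, ← zero_add 1, ← sum_Ico_add', ← range_eq_Ico,
    _root_.sum_apply, inner_sum, map_sum, mul_sum]
  refine sum_le_sum fun n hn => ?_
  rw [mem_range] at hn
  exact (hg (n + 1) (by omega) hn).mul_sq_norm_sub_apply_le (hh (n + 1) (by omega) hn) x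

theorem IsStarProjection.norm_apply_apply_le_of_isPositive {P q : H →L[ℂ] H}
    (hP : IsStarProjection P) (hq : IsStarProjection q) {ε : ℝ} (hε : 0 ≤ ε)
    (h : ((ε ^ 2 : ℝ) • P - P ∘L q ∘L P).IsPositive) (x : H) : ‖q (P x)‖ ≤ ε * ‖P x‖ := by
  have h0 := h.re_inner_nonneg_right x
  rw [sub_apply, smul_apply, real_smul_eq_coe_smul (K := ℂ), inner_sub_right, inner_smul_right,
    map_sub, re_ofReal_mul, hP.re_inner_apply_self, comp_apply, comp_apply,
    ← hP.isSelfAdjoint.isSymmetric.apply_clm, hq.re_inner_apply_self] at h0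
  exact pow_le_pow_iff_left₀ (norm_nonneg _) (by positivity) two_ne_zero |>.mp (by linarith)

section OrthogonalResolution

variable {E : ℕ → H →L[ℂ] H} {N : ℕ}

theorem inner_apply_apply_eq_zero_of_ne (hEsa : ∀ n < N, IsSelfAdjoint (E n))
    (hEE : ∀ k < N, ∀ n < N, E k * E n = if k = n then E n else 0) {k n : ℕ} (hk : k < N)
    (hn : n < N) (hkn : k ≠ n) (x y : H) : ⟪E k x, E n y⟫_ℂ = 0 := by
  rw [(hEsa k hk).isSymmetric.apply_clm, ← mul_apply_eq_comp, hEE k hk n hn, if_neg hkn,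
    zero_apply, inner_zero_right]

theorem norm_sum_apply_sq (hEsa : ∀ n < N, IsSelfAdjoint (E n))
    (hEE : ∀ k < N, ∀ n < N, E k * E n = if k = n then E n else 0) {s : Finset ℕ}
    (hs : s ⊆ range N) (x : H) : ‖∑ k ∈ s, E k x‖ ^ 2 = ∑ k ∈ s, ‖E k x‖ ^ 2 := by
  rw [← inner_self_eq_norm_sq (𝕜 := ℂ), sum_inner, map_sum]
  refine sum_congr rfl fun k hk => ?_
  rw [inner_sum, sum_eq_single_of_mem k hk fun j hj hjk => inner_apply_apply_eq_zero_of_ne hEsa hEE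
    (mem_range.mp (hs hk)) (mem_range.mp (hs hj)) hjk.symm x x, inner_self_eq_norm_sq]

theorem sq_norm_apply_le (hEsa : ∀ n < N, IsSelfAdjoint (E n))
    (hEE : ∀ k < N, ∀ n < N, E k * E n = if k = n then E n else 0) {x : H}
    (hx : ∑ k ∈ range N, E k x = x) {p : H →L[ℂ] H} (hp : IsSelfAdjoint p) {ℓ n : ℕ}
    (hn : n < N) (hcomm : ∀ k < N, k ∉ Icc (n - ℓ) n → Commute (E k) p) :
    ‖E n x‖ ^ 2 ≤ ‖x - p x‖ * ‖E n x‖ + √(∑ k ∈ Icc (n - ℓ) n, ‖E k x‖ ^ 2) * ‖p (E n x)‖ := by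
  have hwin : Icc (n - ℓ) n ⊆ range N := fun k hk => by
    simp only [mem_Icc, mem_range] at hk ⊢; omega
  have hlocal : ⟪x, p (E n x)⟫_ℂ = ⟪∑ k ∈ Icc (n - ℓ) n, E k x, p (E n x)⟫_ℂ := by
    nth_rw 1 [← hx]
    rw [sum_inner, sum_inner]
    refine (sum_subset hwin fun k hk hkW => ?_).symm
    have hkn : k ≠ n := by rintro rfl; simp at hkW
    rw [(hEsa k (mem_range.mp hk)).isSymmetric.apply_clm, ← mul_apply_eq_comp (E k) p,
      (hcomm k (mem_range.mp hk) hkW).eq, mul_apply_eq_comp, ← mul_apply_eq_comp (E k) (E n),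
      hEE k (mem_range.mp hk) n hn, if_neg hkn, zero_apply, map_zero, inner_zero_right]
  have hsplit : ‖E n x‖ ^ 2 = re ⟪x - p x, E n x⟫_ℂ + re ⟪x, p (E n x)⟫_ℂ := by
    have hEn : IsStarProjection (E n) := ⟨(hEE n hn n hn).trans (if_pos rfl), hEsa n hn⟩
    rw [← hEn.re_inner_apply_self, inner_sub_left, hp.isSymmetric.apply_clm, map_sub,
      sub_add_cancel]
  rw [hsplit, hlocal, ← norm_sum_apply_sq hEsa hEE hwin, Real.sqrt_sq (norm_nonneg _)]
  gcongr <;> exact (re_le_norm _).trans (norm_inner_le_norm _ _)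

theorem sq_norm_le_of_commute_off_window (hEsa : ∀ n < N, IsSelfAdjoint (E n))
    (hEE : ∀ k < N, ∀ n < N, E k * E n = if k = n then E n else 0) {x : H}
    (hx : ∑ k ∈ range N, E k x = x) {p : ℕ → H →L[ℂ] H} (hp : ∀ n < N, IsSelfAdjoint (p n))
    {ℓ : ℕ} (hcomm : ∀ n < N, ∀ k < N, k ∉ Icc (n - ℓ) n → Commute (E k) (p n)) {ε : ℝ}
    (hε : 0 ≤ ε) (hpE : ∀ n < N, ‖p n (E n x)‖ ≤ ε * ‖E n x‖) :
    ‖x‖ ^ 2 ≤ √(∑ n ∈ range N, ‖x - p n x‖ ^ 2) * ‖x‖ + ε * √(ℓ + 1) * ‖x‖ ^ 2 := by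
  set a : ℕ → ℝ := fun n => ‖E n x‖
  have hnorm : ‖x‖ ^ 2 = ∑ n ∈ range N, a n ^ 2 := by
    conv_lhs => rw [← hx]
    exact norm_sum_apply_sq hEsa hEE subset_rfl x
  have hsqrt : √(∑ n ∈ range N, a n ^ 2) = ‖x‖ := by rw [← hnorm, Real.sqrt_sq (norm_nonneg x)]
  have hwindows : ∑ n ∈ range N, √(∑ k ∈ Icc (n - ℓ) n, a k ^ 2) ^ 2 ≤ (ℓ + 1) * ‖x‖ ^ 2 := by
    simp_rw [Real.sq_sqrt (sum_nonneg fun _ _ => sq_nonneg _)]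
    rw [hnorm]
    exact sum_range_sum_Icc_sub_le (fun _ => sq_nonneg _) N ℓ
  calc ‖x‖ ^ 2 = ∑ n ∈ range N, a n ^ 2 := hnorm
    _ ≤ ∑ n ∈ range N, ‖x - p n x‖ * a n
          + ε * ∑ n ∈ range N, √(∑ k ∈ Icc (n - ℓ) n, a k ^ 2) * a n := by
      rw [mul_sum, ← sum_add_distrib]
      refine sum_le_sum fun n hn => (sq_norm_apply_le hEsa hEE hx (hp n (mem_range.mp hn))
        (mem_range.mp hn) (hcomm n (mem_range.mp hn))).trans ?_
      rw [mul_left_comm ε]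
      gcongr
      exact hpE n (mem_range.mp hn)
    _ ≤ √(∑ n ∈ range N, ‖x - p n x‖ ^ 2) * ‖x‖ + ε * (√((ℓ + 1) * ‖x‖ ^ 2) * ‖x‖) := by
      gcongr
      · simpa only [hsqrt] using Real.sum_mul_le_sqrt_mul_sqrt (range N) (‖x - p · x‖) a
      · refine (Real.sum_mul_le_sqrt_mul_sqrt _ _ _).trans ?_
        rw [hsqrt]
        gcongr
    _ = _ := by rw [Real.sqrt_mul (by positivity), Real.sqrt_sq (norm_nonneg x)]; ring

end OrthogonalResolution

end HilbertSpace

theorem martingale_method_general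
    {H : Type*} [NormedAddCommGroup H] [InnerProductSpace ℂ H] [CompleteSpace H]
    (N : ℕ)
    -- the bounded non-negative self-adjoint operators `h_1, …, h_N`
    (h : ℕ → H →L[ℂ] H)
    (hpos : ∀ n, 1 ≤ n → n ≤ N → (h n).IsPositive)
    -- `G n` is the orthogonal projection onto `ker H_n`, where `H_n = ∑_{k=1}^n h_k`
    (G : ℕ → H →L[ℂ] H)
    (hGproj : ∀ n ≤ N, IsSelfAdjoint (G n) ∧ G n ∘L G n = G n ∧
      ∀ ψ : H, G n ψ = ψ ↔ (∑ k ∈ Finset.Icc 1 n, h k) ψ = 0)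
    -- `g n` is the orthogonal projection onto `ker h_n`
    (g : ℕ → H →L[ℂ] H)
    (hgproj : ∀ n, 1 ≤ n → n ≤ N → (IsSelfAdjoint (g n) ∧ g n ∘L g n = g n ∧
      ∀ ψ : H, g n ψ = ψ ↔ h n ψ = 0))
    -- the resolution of the identity `E_n`
    (E : ℕ → H →L[ℂ] H)
    (hE0 : E 0 = 1 - G 1)
    (hEmid : ∀ n, 1 ≤ n → n ≤ N - 1 → E n = G n - G (n + 1))
    -- Assumption (i)
    (γ : ℝ) (hγ : 0 < γ)
    (hass1 : ∀ n, 1 ≤ n → n ≤ N → (h n - γ • (1 - g n)).IsPositive)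
    -- Assumption (ii)
    (ℓ : ℕ)
    (hass2 : ∀ n, n ≤ N - 1 → ∀ k, k ≤ N → (k < n - ℓ ∨ n < k) →
      E k ∘L g (n + 1) = g (n + 1) ∘L E k)
    -- Assumption (iii)
    (ε : ℝ) (hε0 : 0 < ε) (hε1 : ε < 1 / Real.sqrt ((ℓ : ℝ) + 1))
    (hass3 : ∀ n, n ≤ N - 1 → ((ε ^ 2 : ℝ) • E n - E n ∘L g (n + 1) ∘L E n).IsPositive)
    -- the vector `ψ` orthogonal to the ground state space
    (ψ : H) (hψ : G N ψ = 0) :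
    γ * (1 - ε * Real.sqrt (1 + (ℓ : ℝ))) ^ 2 * ‖ψ‖ ^ 2 ≤
      RCLike.re (@inner ℂ H _ ψ ((∑ k ∈ Finset.Icc 1 N, h k) ψ)) := by
  obtain ⟨hEproj, hEE, hψsum⟩ := resolution_of_kerProjections hpos hGproj hE0 hEmid
  have hg : ∀ n, 1 ≤ n → n ≤ N → IsStarProjection (g n) := fun n hn1 hn =>
    ⟨(hgproj n hn1 hn).2.1, (hgproj n hn1 hn).1⟩
  have hlocal := sq_norm_le_of_commute_off_window (ℓ := ℓ)
    (fun n hn => (hEproj n hn).isSelfAdjoint) hEE (hψsum ψ hψ)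
    (fun n hn => (hg (n + 1) (by omega) hn).isSelfAdjoint)
    (fun n hn k hk hkW => hass2 n (by omega) k hk.le (by rw [mem_Icc] at hkW; omega)) hε0.le
    fun n hn => (hEproj n hn).norm_apply_apply_le_of_isPositive (hg (n + 1) (by omega) hn)
      hε0.le (hass3 n (by omega)) ψ
  have henergy := mul_sum_sq_norm_sub_apply_le hg hass1 ψ
  have hε : ε * √(ℓ + 1) < 1 := (lt_div_iff₀ (by positivity)).mp hε1
  calc γ * (1 - ε * √(1 + ℓ)) ^ 2 * ‖ψ‖ ^ 2 = γ * ((1 - ε * √(ℓ + 1)) * ‖ψ‖) ^ 2 := by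
        rw [add_comm]; ring
    _ ≤ γ * √(∑ n ∈ range N, ‖ψ - g (n + 1) ψ‖ ^ 2) ^ 2 :=
        mul_le_mul_of_nonneg_left (sq_le_sq_of_sq_le_mul_add_mul (norm_nonneg ψ) hε hlocal) hγ.le
    _ ≤ _ := by rwa [Real.sq_sqrt (by positivity)]

/-- the martingale method. Given an increasing sequence of non-negative
Hamiltonians `H_n = ∑_{k=1}^n h_k` with kernel projections `G_n` (and `g_n` for `h_n`),
and the resolution of the identity `E_0 = 1 - G_1`, `E_n = G_n - G_{n+1}`, `E_N = G_N`,
Assumptions (i)-(iii) imply the gap estimate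
`⟨ψ, H_N ψ⟩ ≥ γ (1 - ε √(1+ℓ))² ‖ψ‖²` for every `ψ` with `G_N ψ = 0`. -/
theorem martingale_method
    {H : Type*} [NormedAddCommGroup H] [InnerProductSpace ℂ H] [CompleteSpace H]
    (N : ℕ) (hN : 1 ≤ N)
    -- the bounded non-negative self-adjoint operators `h_1, …, h_N`
    (h : ℕ → H →L[ℂ] H)
    (hpos : ∀ n, 1 ≤ n → n ≤ N → (h n).IsPositive)
    -- `G n` is the orthogonal projection onto `ker H_n`, where `H_n = ∑_{k=1}^n h_k`
    (G : ℕ → H →L[ℂ] H)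
    (hGproj : ∀ n ≤ N, IsSelfAdjoint (G n) ∧ G n ∘L G n = G n ∧
      ∀ ψ : H, G n ψ = ψ ↔ (∑ k ∈ Finset.Icc 1 n, h k) ψ = 0)
    -- `g n` is the orthogonal projection onto `ker h_n`
    (g : ℕ → H →L[ℂ] H)
    (hgproj : ∀ n, 1 ≤ n → n ≤ N → (IsSelfAdjoint (g n) ∧ g n ∘L g n = g n ∧
      ∀ ψ : H, g n ψ = ψ ↔ h n ψ = 0))
    -- the resolution of the identity `E_n`
    (E : ℕ → H →L[ℂ] H)
    (hE0 : E 0 = 1 - G 1)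
    (hEmid : ∀ n, 1 ≤ n → n ≤ N - 1 → E n = G n - G (n + 1))
    (hEN : E N = G N)
    -- Assumption (i)
    (γ : ℝ) (hγ : 0 < γ)
    (hass1 : ∀ n, 1 ≤ n → n ≤ N → (h n - γ • (1 - g n)).IsPositive)
    -- Assumption (ii)
    (ℓ : ℕ)
    (hass2 : ∀ n, n ≤ N - 1 → ∀ k, k ≤ N → (k < n - ℓ ∨ n < k) →
      E k ∘L g (n + 1) = g (n + 1) ∘L E k)
    -- Assumption (iii)
    (ε : ℝ) (hε0 : 0 < ε) (hε1 : ε < 1 / Real.sqrt ((ℓ : ℝ) + 1))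
    (hass3 : ∀ n, n ≤ N - 1 → ((ε ^ 2 : ℝ) • E n - E n ∘L g (n + 1) ∘L E n).IsPositive)
    -- the vector `ψ` orthogonal to the ground state space
    (ψ : H) (hψ : G N ψ = 0) :
    γ * (1 - ε * Real.sqrt (1 + (ℓ : ℝ))) ^ 2 * ‖ψ‖ ^ 2 ≤
      RCLike.re (@inner ℂ H _ ψ ((∑ k ∈ Finset.Icc 1 N, h k) ψ)) :=
  martingale_method_general N h hpos G hGproj g hgproj E hE0 hEmid γ hγ hass1 ℓ hass2 ε hε0 hε1
    hass3 ψ hψ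
end

section
/- Let X, Y be finite disjoint subsets of Γ. If A ∈ 𝔄_X⁺ and B ∈ 𝔄_Y, then [A,B] = 0. Conversely, assuming the monomials supported in X ∪ Y are linearly independent in 𝔄: if A ∈ 𝔄_X, B ∈ 𝔄_Y and [A,B] = 0, then A ∈ 𝔄_X⁺ or B ∈ 𝔄_Y⁺. -/
open scoped Classical

/-- The canonical anticommutation relations for a family `a x` of annihilation
operators in a C*-algebra. -/
def IsCAR {Γ A : Type*} [Ring A] [StarRing A] (a : Γ → A) : Prop :=
  (∀ x y, a x * a y + a y * a x = 0) ∧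
  (∀ x y, star (a x) * star (a y) + star (a y) * star (a x) = 0) ∧
  (∀ x y, a x * star (a y) + star (a y) * a x = if x = y then (1 : A) else 0)

/-- The four possible factors of a monomial at a site `x`:
`1`, `a x`, `a x *`, and `a x * a x`. -/
def carFactor {Γ A : Type*} [Ring A] [StarRing A] (a : Γ → A) (k : Fin 4) (x : Γ) : A :=
  match k with
  | 0 => 1
  | 1 => a x
  | 2 => star (a x)
  | 3 => star (a x) * a x

/-- The monomial with factor pattern `k` along the enumeration `l` of a finite set of sites. -/
def carMonomial {Γ A : Type*} [Ring A] [StarRing A] (a : Γ → A) (l : List Γ)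
    (k : Γ → Fin 4) : A :=
  (l.map fun x => carFactor a (k x) x).prod

/-- The number of odd factors (`a x` or `a x *`) of the monomial with pattern `k` along `l`. -/
def carOddCount {Γ : Type*} (l : List Γ) (k : Γ → Fin 4) : ℕ :=
  l.countP fun x => decide (k x = 1 ∨ k x = 2)

/-- `𝔄_X`: the linear span of the monomials supported in the finite set `X`. -/
def carSpan {Γ A : Type*} [Ring A] [StarRing A] [Algebra ℂ A] (a : Γ → A) (X : Finset Γ) :
    Submodule ℂ A :=
  Submodule.span ℂ {m | ∃ (l : List Γ) (k : Γ → Fin 4),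
    l.Nodup ∧ l.toFinset = X ∧ m = carMonomial a l k}

/-- `𝔄_X⁺`: the linear span of the even monomials supported in the finite set `X`. -/
def carSpanEven {Γ A : Type*} [Ring A] [StarRing A] [Algebra ℂ A] (a : Γ → A) (X : Finset Γ) :
    Submodule ℂ A :=
  Submodule.span ℂ {m | ∃ (l : List Γ) (k : Γ → Fin 4),
    l.Nodup ∧ l.toFinset = X ∧ Even (carOddCount l k) ∧ m = carMonomial a l k}

/-! Monomials with disjoint supports commute up to the sign `(-1) ^ (p * q)`, where `p` and `q`
count their odd factors; this gives the first half. For the converse split `A = A⁺ + A⁻` and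
`B = B⁺ + B⁻` into even and odd parts, so that `[A, B] = 2 A⁻ B⁻`. Up to signs, products of
normal-ordered monomials on `X` and on `Y` are distinct monomials on `X ∪ Y`, hence linearly
independent, and so `A⁻ B⁻ = 0` forces `A⁻ = 0` or `B⁻ = 0`. -/

section Algebra

open Submodule

theorem commute_mul_of_mul_eq_neg {R : Type*} [Ring R] {g u v : R} (hu : g * u = -(u * g))
    (hv : g * v = -(v * g)) : Commute g (u * v) := by
  rw [Commute, SemiconjBy, ← mul_assoc, hu, neg_mul, mul_assoc, hv, mul_neg, neg_neg, mul_assoc]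

theorem Submodule.mul_eq_smul_mul_of_mem_span {R A : Type*} [CommSemiring R] [Semiring A]
    [Algebra R A] {S T : Set A} {r : R} (h : ∀ s ∈ S, ∀ t ∈ T, s * t = r • (t * s))
    {x y : A} (hx : x ∈ span R S) (hy : y ∈ span R T) : x * y = r • (y * x) := by
  induction hx, hy using span_induction₂ with
  | mem_mem s t hs ht => exact h s hs t ht
  | zero_left => simp
  | zero_right => simp
  | add_left x y z _ _ _ hxz hyz => rw [add_mul, mul_add, smul_add, hxz, hyz]
  | add_right x y z _ _ _ hxy hxz => rw [mul_add, add_mul, smul_add, hxy, hxz]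
  | smul_left c x y _ _ hxy => rw [smul_mul_assoc, mul_smul_comm, hxy, smul_comm]
  | smul_right c x y _ _ hxy => rw [mul_smul_comm, smul_mul_assoc, hxy, smul_comm]

theorem LinearIndependent.eq_zero_or_eq_zero_of_mul_eq_zero {R A ι κ : Type*} [CommRing R]
    [NoZeroDivisors R] [Ring A] [Algebra R A] [Fintype ι] [Fintype κ] {u : ι → A}
    {w : κ → A} (h : LinearIndependent R fun p : ι × κ => u p.1 * w p.2) {x y : A}
    (hx : x ∈ span R (Set.range u)) (hy : y ∈ span R (Set.range w)) (hxy : x * y = 0) :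
    x = 0 ∨ y = 0 := by
  obtain ⟨c, rfl⟩ := (mem_span_range_iff_exists_fun R).mp hx
  obtain ⟨d, rfl⟩ := (mem_span_range_iff_exists_fun R).mp hy
  have hcd : ∀ p : ι × κ, c p.1 * d p.2 = 0 := by
    refine Fintype.linearIndependent_iff.mp h _ ?_
    rw [← hxy, Finset.sum_mul_sum, ← Finset.univ_product_univ, Finset.sum_product]
    simp only [smul_mul_smul_comm]
  by_cases hc : c = 0
  · left
    simp [hc]
  · obtain ⟨i, hi⟩ := Function.ne_iff.mp hc
    right
    have hd : d = 0 := funext fun j => (mul_eq_zero.mp (hcd (i, j))).resolve_left hi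
    simp [hd]

end Algebra

section Monomials

variable {Γ A : Type*} [Ring A] [StarRing A] {a : Γ → A}

def carParity (k : Fin 4) : ℕ := if k = 1 ∨ k = 2 then 1 else 0

theorem carOddCount_cons (x : Γ) (l : List Γ) (k : Γ → Fin 4) :
    carOddCount (x :: l) k = carParity (k x) + carOddCount l k := by
  rw [carOddCount, List.countP_cons, carParity, add_comm]
  split_ifs <;> simp_all [carOddCount]

theorem carMonomial_cons (x : Γ) (l : List Γ) (k : Γ → Fin 4) :
    carMonomial a (x :: l) k = carFactor a (k x) x * carMonomial a l k := by
  simp [carMonomial]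

theorem carMonomial_append (l₁ l₂ : List Γ) (k : Γ → Fin 4) :
    carMonomial a (l₁ ++ l₂) k = carMonomial a l₁ k * carMonomial a l₂ k := by
  simp [carMonomial]

theorem carMonomial_congr {l : List Γ} {k k' : Γ → Fin 4} (h : ∀ x ∈ l, k x = k' x) :
    carMonomial a l k = carMonomial a l k' := by
  unfold carMonomial
  rw [List.map_congr_left fun x hx => by rw [h x hx]]

namespace IsCAR

theorem anticomm_of_ne (h : IsCAR a) {x y : Γ} (hxy : x ≠ y) :
    a x * a y = -(a y * a x) ∧ star (a x) * star (a y) = -(star (a y) * star (a x)) ∧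
      a x * star (a y) = -(star (a y) * a x) ∧ star (a x) * a y = -(a y * star (a x)) := by
  obtain ⟨h₁, h₂, h₃⟩ := h
  exact ⟨eq_neg_of_add_eq_zero_left (h₁ x y), eq_neg_of_add_eq_zero_left (h₂ x y),
    eq_neg_of_add_eq_zero_left (by rw [h₃ x y, if_neg hxy]),
    eq_neg_of_add_eq_zero_right (by rw [h₃ y x, if_neg hxy.symm])⟩

theorem carFactor_mul_carFactor (h : IsCAR a) {x y : Γ} (hxy : x ≠ y) (kx ky : Fin 4) :
    carFactor a kx x * carFactor a ky y =
      (-1 : ℤˣ) ^ (carParity kx * carParity ky) • (carFactor a ky y * carFactor a kx x) := by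
  obtain ⟨e₁, e₂, e₃, e₄⟩ := h.anticomm_of_ne hxy
  obtain ⟨f₁, f₂, f₃, f₄⟩ := h.anticomm_of_ne hxy.symm
  have c₁ := commute_mul_of_mul_eq_neg e₃ e₁
  have c₂ := commute_mul_of_mul_eq_neg e₂ e₄
  have c₃ := (commute_mul_of_mul_eq_neg f₃ f₁).symm
  have c₄ := (commute_mul_of_mul_eq_neg f₂ f₄).symm
  have c₅ := c₂.mul_left c₁
  fin_cases kx <;> fin_cases ky <;> simp [carFactor, carParity] <;> assumption

theorem carFactor_mul_carMonomial (h : IsCAR a) {y : Γ} {l : List Γ} (hy : y ∉ l) (ky : Fin 4)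
    (k : Γ → Fin 4) :
    carFactor a ky y * carMonomial a l k =
      (-1 : ℤˣ) ^ (carParity ky * carOddCount l k) •
        (carMonomial a l k * carFactor a ky y) := by
  induction l with
  | nil => simp [carMonomial, carOddCount]
  | cons x t ih =>
    rw [List.mem_cons, not_or] at hy
    rw [carMonomial_cons, carOddCount_cons, ← mul_assoc, h.carFactor_mul_carFactor hy.1,
      smul_mul_assoc, mul_assoc, ih hy.2, mul_smul_comm, smul_smul, ← pow_add, ← mul_add,
      ← mul_assoc]

theorem carMonomial_mul_carMonomial (h : IsCAR a) {l₁ l₂ : List Γ} (hl : l₁.Disjoint l₂)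
    (k₁ k₂ : Γ → Fin 4) :
    carMonomial a l₁ k₁ * carMonomial a l₂ k₂ =
      (-1 : ℤˣ) ^ (carOddCount l₁ k₁ * carOddCount l₂ k₂) •
        (carMonomial a l₂ k₂ * carMonomial a l₁ k₁) := by
  induction l₁ with
  | nil => simp [carMonomial, carOddCount]
  | cons x t ih =>
    rw [List.disjoint_cons_left] at hl
    rw [carMonomial_cons, carOddCount_cons, mul_assoc, ih hl.2, mul_smul_comm,
      ← mul_assoc, h.carFactor_mul_carMonomial hl.1, smul_mul_assoc, smul_smul, ← pow_add,
      add_mul, mul_assoc, add_comm]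

theorem carMonomial_perm (h : IsCAR a) (k : Γ → Fin 4) {l l' : List Γ} (hp : l.Perm l')
    (hl : l.Nodup) :
    ∃ u : ℤˣ, carMonomial a l k = u • carMonomial a l' k := by
  induction hp with
  | nil => exact ⟨1, by simp⟩
  | cons x _ ih =>
    obtain ⟨u, e⟩ := ih (List.nodup_cons.mp hl).2
    exact ⟨u, by rw [carMonomial_cons, carMonomial_cons, e, mul_smul_comm]⟩
  | swap x y t =>
    have hyx : y ≠ x := fun e => (List.nodup_cons.mp hl).1 (e ▸ List.mem_cons_self)
    refine ⟨(-1) ^ (carParity (k y) * carParity (k x)), ?_⟩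
    rw [carMonomial_cons, carMonomial_cons, carMonomial_cons, carMonomial_cons,
      ← mul_assoc, ← mul_assoc, h.carFactor_mul_carFactor hyx, smul_mul_assoc]
  | trans hp₁ _ ih₁ ih₂ =>
    obtain ⟨u₁, e₁⟩ := ih₁ hl
    obtain ⟨u₂, e₂⟩ := ih₂ (hp₁.nodup_iff.mp hl)
    exact ⟨u₁ * u₂, by rw [e₁, e₂, smul_smul]⟩

end IsCAR

end Monomials

section Spans

variable {Γ A : Type*} [Ring A] [StarRing A] [Algebra ℂ A] {a : Γ → A}

def carSpanOdd (a : Γ → A) (X : Finset Γ) : Submodule ℂ A :=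
  Submodule.span ℂ {m | ∃ (l : List Γ) (k : Γ → Fin 4),
    l.Nodup ∧ l.toFinset = X ∧ Odd (carOddCount l k) ∧ m = carMonomial a l k}

theorem carSpan_le_carSpanEven_sup_carSpanOdd (a : Γ → A) (X : Finset Γ) :
    carSpan a X ≤ carSpanEven a X ⊔ carSpanOdd a X := by
  rw [carSpan, Submodule.span_le]
  rintro _ ⟨l, k, hl, hlX, rfl⟩
  rcases Nat.even_or_odd (carOddCount l k) with he | ho
  · exact Submodule.mem_sup_left (Submodule.subset_span ⟨l, k, hl, hlX, he, rfl⟩)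
  · exact Submodule.mem_sup_right (Submodule.subset_span ⟨l, k, hl, hlX, ho, rfl⟩)

theorem carSpanOdd_le_carSpan (a : Γ → A) (X : Finset Γ) : carSpanOdd a X ≤ carSpan a X :=
  Submodule.span_mono fun _ ⟨l, k, hl, hlX, _, hm⟩ => ⟨l, k, hl, hlX, hm⟩

noncomputable def extendPattern (X : Finset Γ) (k : X → Fin 4) : Γ → Fin 4 :=
  fun x => if h : x ∈ X then k ⟨x, h⟩ else 0

namespace IsCAR

theorem commute_of_mem_carSpanEven (h : IsCAR a) {X Y : Finset Γ} (hXY : Disjoint X Y) {x y : A}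
    (hx : x ∈ carSpanEven a X) (hy : y ∈ carSpan a Y) : x * y = y * x := by
  refine (Submodule.mul_eq_smul_mul_of_mem_span (r := (1 : ℂ)) ?_ hx hy).trans (one_smul _ _)
  rintro _ ⟨l₁, k₁, -, rfl, hev, rfl⟩ _ ⟨l₂, k₂, -, rfl, rfl⟩
  rw [h.carMonomial_mul_carMonomial (List.disjoint_toFinset_iff_disjoint.mp hXY),
    (hev.mul_right _).neg_one_pow, one_smul, one_smul]

theorem anticommute_of_mem_carSpanOdd (h : IsCAR a) {X Y : Finset Γ} (hXY : Disjoint X Y)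
    {x y : A} (hx : x ∈ carSpanOdd a X) (hy : y ∈ carSpanOdd a Y) : x * y = -(y * x) := by
  refine (Submodule.mul_eq_smul_mul_of_mem_span (r := (-1 : ℂ)) ?_ hx hy).trans
    (neg_one_smul _ _)
  rintro _ ⟨l₁, k₁, -, rfl, ho₁, rfl⟩ _ ⟨l₂, k₂, -, rfl, ho₂, rfl⟩
  rw [h.carMonomial_mul_carMonomial (List.disjoint_toFinset_iff_disjoint.mp hXY),
    (ho₁.mul ho₂).neg_one_pow, neg_one_smul, Units.neg_smul, one_smul]

theorem carSpan_le_span_carMonomial (h : IsCAR a) {X : Finset Γ} {l : List Γ} (hl : l.Nodup)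
    (hlX : l.toFinset = X) :
    carSpan a X ≤
      Submodule.span ℂ (Set.range fun k => carMonomial a l (extendPattern X k)) := by
  rw [carSpan, Submodule.span_le]
  rintro _ ⟨l', k, hl', hl'X, rfl⟩
  obtain ⟨u, hu⟩ := h.carMonomial_perm k
    (List.perm_of_nodup_nodup_toFinset_eq hl' hl (hl'X.trans hlX.symm)) hl'
  have hk : carMonomial a l k = carMonomial a l (extendPattern X fun x => k x) :=
    carMonomial_congr fun x hx => by simp [extendPattern, ← hlX, hx]
  rw [hu, hk]
  exact Submodule.smul_of_tower_mem _ u (Submodule.subset_span ⟨_, rfl⟩)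

theorem linearIndependent_carMonomial_mul (h : IsCAR a) {X Y : Finset Γ} (hXY : Disjoint X Y)
    {l : List Γ} (hl : l.Nodup) (hlXY : l.toFinset = X ∪ Y)
    (hind : LinearIndependent ℂ fun k => carMonomial a l (extendPattern (X ∪ Y) k))
    {lX lY : List Γ} (hlX : lX.Nodup) (hlXX : lX.toFinset = X) (hlY : lY.Nodup)
    (hlYY : lY.toFinset = Y) :
    LinearIndependent ℂ fun p : (X → Fin 4) × (Y → Fin 4) =>
      carMonomial a lX (extendPattern X p.1) * carMonomial a lY (extendPattern Y p.2) := by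
  let glue (p : (X → Fin 4) × (Y → Fin 4)) (x : ↥(X ∪ Y)) : Fin 4 :=
    if x.1 ∈ X then extendPattern X p.1 x else extendPattern Y p.2 x
  have hglue : ∀ p, ∀ x, extendPattern (X ∪ Y) (glue p) x =
      if x ∈ X then extendPattern X p.1 x else extendPattern Y p.2 x := by
    intro p x
    by_cases hx : x ∈ X ∪ Y
    · simp [extendPattern, glue, hx]
    · simp_all [extendPattern]
  have hglue_inj : Function.Injective glue := by
    rintro ⟨k, j⟩ ⟨k', j'⟩ hkj
    have hx (x : Γ) (hx : x ∈ X ∪ Y) := congrFun hkj ⟨x, hx⟩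
    refine Prod.ext (funext fun x => ?_) (funext fun x => ?_)
    · simpa [glue, extendPattern] using hx x (Finset.mem_union_left Y x.2)
    · simpa [glue, extendPattern, Finset.disjoint_right.mp hXY x.2] using
        hx x (Finset.mem_union_right X x.2)
  have hdisj : lX.Disjoint lY := List.disjoint_toFinset_iff_disjoint.mp (hlXX ▸ hlYY ▸ hXY)
  have hnodup : (lX ++ lY).Nodup := hlX.append hlY hdisj
  have hperm : (lX ++ lY).Perm l := List.perm_of_nodup_nodup_toFinset_eq hnodup hl
    (by rw [List.toFinset_append, hlXX, hlYY, hlXY])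
  have hsign : ∀ p, ∃ u : ℤˣ,
      carMonomial a lX (extendPattern X p.1) * carMonomial a lY (extendPattern Y p.2) =
        u • carMonomial a l (extendPattern (X ∪ Y) (glue p)) := by
    intro p
    obtain ⟨u, hu⟩ := h.carMonomial_perm (extendPattern (X ∪ Y) (glue p)) hperm hnodup
    refine ⟨u, ?_⟩
    rw [← hu, carMonomial_append]
    congr 1 <;> refine carMonomial_congr fun x hx => ?_ <;> rw [hglue]
    · rw [if_pos (hlXX ▸ List.mem_toFinset.mpr hx)]
    · rw [if_neg (Finset.disjoint_right.mp hXY (hlYY ▸ List.mem_toFinset.mpr hx))]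
  choose u hu using hsign
  convert (hind.comp glue hglue_inj).group_smul u with p
  exact hu p

theorem eq_zero_or_eq_zero_of_mul_eq_zero (h : IsCAR a) {X Y : Finset Γ} (hXY : Disjoint X Y)
    {l : List Γ} (hl : l.Nodup) (hlXY : l.toFinset = X ∪ Y)
    (hind : LinearIndependent ℂ fun k => carMonomial a l (extendPattern (X ∪ Y) k))
    {x y : A} (hx : x ∈ carSpan a X) (hy : y ∈ carSpan a Y) (hxy : x * y = 0) :
    x = 0 ∨ y = 0 := by
  have hli := h.linearIndependent_carMonomial_mul hXY hl hlXY hind X.nodup_toList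
    X.toList_toFinset Y.nodup_toList Y.toList_toFinset
  exact hli.eq_zero_or_eq_zero_of_mul_eq_zero
    (u := fun k => carMonomial a X.toList (extendPattern X k))
    (w := fun k => carMonomial a Y.toList (extendPattern Y k))
    (h.carSpan_le_span_carMonomial X.nodup_toList X.toList_toFinset hx)
    (h.carSpan_le_span_carMonomial Y.nodup_toList Y.toList_toFinset hy) hxy

end IsCAR

end Spans

theorem commutator_vanishes_iff_even_general
    {Γ A : Type*} [NormedRing A] [StarRing A] [NormedAlgebra ℂ A]
    (a : Γ → A) (hCAR : IsCAR a)
    (X Y : Finset Γ) (hXY : Disjoint X Y)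
    (l : List Γ) (hl : l.Nodup) (hlXY : l.toFinset = X ∪ Y)
    (hind : LinearIndependent ℂ fun k : {x // x ∈ X ∪ Y} → Fin 4 =>
      carMonomial a l fun x => if h : x ∈ X ∪ Y then k ⟨x, h⟩ else 0) :
    (∀ A₀ ∈ carSpanEven a X, ∀ B₀ ∈ carSpan a Y, A₀ * B₀ - B₀ * A₀ = 0) ∧
    (∀ A₀ ∈ carSpan a X, ∀ B₀ ∈ carSpan a Y, A₀ * B₀ - B₀ * A₀ = 0 →
      A₀ ∈ carSpanEven a X ∨ B₀ ∈ carSpanEven a Y) := by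
  refine ⟨fun A₀ hA B₀ hB => sub_eq_zero.mpr (hCAR.commute_of_mem_carSpanEven hXY hA hB),
    ?_⟩
  intro A₀ hA B₀ hB hAB
  obtain ⟨Aeven, hAeven, Aodd, hAodd, rfl⟩ :=
    Submodule.mem_sup.mp (carSpan_le_carSpanEven_sup_carSpanOdd a X hA)
  obtain ⟨Beven, hBeven, Bodd, hBodd, rfl⟩ :=
    Submodule.mem_sup.mp (carSpan_le_carSpanEven_sup_carSpanOdd a Y hB)
  have hAeven_comm := hCAR.commute_of_mem_carSpanEven hXY hAeven hB
  have hBeven_comm :=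
    hCAR.commute_of_mem_carSpanEven hXY.symm hBeven (carSpanOdd_le_carSpan a X hAodd)
  have hodd_anticomm := hCAR.anticommute_of_mem_carSpanOdd hXY hAodd hBodd
  have hodd : (2 : ℂ) • (Aodd * Bodd) = 0 := by
    have hsplit : (Aeven + Aodd) * (Beven + Bodd) - (Beven + Bodd) * (Aeven + Aodd) =
        (Aeven * (Beven + Bodd) - (Beven + Bodd) * Aeven) + (Aodd * Beven - Beven * Aodd) +
          (Aodd * Bodd - Bodd * Aodd) := by
      noncomm_ring
    rw [← hAB, hsplit, hAeven_comm, hBeven_comm, hodd_anticomm, two_smul]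
    abel
  rcases hCAR.eq_zero_or_eq_zero_of_mul_eq_zero hXY hl hlXY hind
    (carSpanOdd_le_carSpan a X hAodd) (carSpanOdd_le_carSpan a Y hBodd)
    ((smul_eq_zero.mp hodd).resolve_left two_ne_zero) with h | h
  · exact .inl (by rwa [h, add_zero])
  · exact .inr (by rwa [h, add_zero])

/-- if `A ∈ 𝔄_X⁺` and `B ∈ 𝔄_Y` with `X ∩ Y = ∅` then `[A,B] = 0`; conversely,
if the monomials supported in `X ∪ Y` (for a fixed enumeration `l`) are linearly independent,
`A ∈ 𝔄_X`, `B ∈ 𝔄_Y` and `[A,B] = 0`, then `A ∈ 𝔄_X⁺` or `B ∈ 𝔄_Y⁺`. -/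
theorem commutator_vanishes_iff_even
    {Γ A : Type*} [NormedRing A] [StarRing A] [CStarRing A] [NormedAlgebra ℂ A]
    (a : Γ → A) (hCAR : IsCAR a)
    (X Y : Finset Γ) (hXY : Disjoint X Y)
    (l : List Γ) (hl : l.Nodup) (hlXY : l.toFinset = X ∪ Y)
    (hind : LinearIndependent ℂ fun k : {x // x ∈ X ∪ Y} → Fin 4 =>
      carMonomial a l fun x => if h : x ∈ X ∪ Y then k ⟨x, h⟩ else 0) :
    (∀ A₀ ∈ carSpanEven a X, ∀ B₀ ∈ carSpan a Y, A₀ * B₀ - B₀ * A₀ = 0) ∧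
    (∀ A₀ ∈ carSpan a X, ∀ B₀ ∈ carSpan a Y, A₀ * B₀ - B₀ * A₀ = 0 →
      A₀ ∈ carSpanEven a X ∨ B₀ ∈ carSpanEven a Y) :=
  commutator_vanishes_iff_even_general a hCAR X Y hXY l hl hlXY hind
end

section
/- Norm bound for operator-valued ODEs: Let ℋ be a complex Hilbert space, I ⊆ ℝ an interval, and A, B : I → B(ℋ) norm-continuous with A(t)* = A(t) for all t ∈ I. Fix t₀ ∈ I and f₀ ∈ B(ℋ), and let f : I → B(ℋ) be a (norm-)differentiable solution of f'(t) = i[A(t), f(t)] + B(t) with f(t₀) = f₀. Then for every t ∈ I, ‖f(t)‖ ≤ ‖f(t₀)‖ + ∫_{t₋}^{t₊} ‖B(s)‖ ds, where t₊ = max{t, t₀} and t₋ = min{t, t₀}. -/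
/-!
Fix `x ∈ I`. Near `x`, the solution agrees to first order with
`z ↦ e^{(z-x)iA(x)} f(x) e^{-(z-x)iA(x)} + (z - x) B(x)`, and conjugation by the unitaries
`e^{±(z-x)iA(x)}` preserves the norm. Hence the right Dini derivative of `‖f‖` is at most
`‖B(x)‖`, and the fencing theorem for Dini derivatives integrates this bound forward in time.
Backward in time, the substitution `s ↦ t + t₀ - s` gives an equation of the same form.
-/

open MeasureTheory Set Filter Topology NormedSpace

theorem image_le_add_integral_of_liminf_slope_right_le {u g : ℝ → ℝ} {a b : ℝ} (hab : a ≤ b)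
    (hu : ContinuousOn u (Icc a b)) (hg : ContinuousOn g (Icc a b))
    (bound : ∀ x ∈ Ico a b, ∀ r, g x < r → ∃ᶠ z in 𝓝[>] x, slope u x z < r) :
    u b ≤ u a + ∫ x in a..b, g x := by
  -- a continuous extension of `g` to `ℝ`, whose primitive is differentiable everywhere
  set φ : ℝ → ℝ := fun s => g (projIcc a b hab s)
  have hφ : Continuous φ := hg.domRestrict.comp continuous_projIcc
  have hφg : EqOn φ g (Icc a b) := fun s hs => by simp [φ, projIcc_of_mem hab hs]
  have hprim (x : ℝ) : HasDerivAt (fun y => u a + ∫ s in a..y, φ s) (φ x) x :=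
    ((hφ.integral_hasStrictDerivAt a x).hasDerivAt).const_add _
  have key := image_le_of_liminf_slope_right_le_deriv_boundary hu (by simp)
    (fun x _ => (hprim x).continuousAt.continuousWithinAt) (fun x _ => (hprim x).hasDerivWithinAt)
    (fun x hx => hφg (Ico_subset_Icc_self hx) ▸ bound x hx) (right_mem_Icc.2 hab)
  rwa [intervalIntegral.integral_congr (hφg.mono (uIcc_of_le hab).subset)] at key

section NormedAlgebra

variable {E : Type*} [NormedRing E] [NormedAlgebra ℝ E]

theorem hasDerivWithinAt_comp_const_sub_of_commutator {f : ℝ → E} {a b : E} {I : Set ℝ}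
    {c u : ℝ} (hf : HasDerivWithinAt f (a * f (c - u) - f (c - u) * a + b) I (c - u)) :
    HasDerivWithinAt (fun v => f (c - v)) (-a * f (c - u) - f (c - u) * -a + -b)
      ((c - ·) ⁻¹' I) u := by
  have := hf.scomp u ((hasDerivWithinAt_id u _).const_sub c) (mapsTo_preimage _ _)
  rw [neg_one_smul, neg_add, neg_sub] at this
  rwa [neg_mul, mul_neg, sub_neg_eq_add, neg_add_eq_sub]

theorem hasDerivAt_exp_smul_mul_mul_exp_smul_neg [CompleteSpace E] (a c : E) (x : ℝ) :
    HasDerivAt (fun z : ℝ => exp ((z - x) • a) * c * exp ((z - x) • -a)) (a * c - c * a) x := by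
  have hexp (b : E) : HasDerivAt (fun u : ℝ => exp (u • b)) b 0 := by
    simpa using hasDerivAt_exp_smul_const (𝕂 := ℝ) b 0
  have h0 := ((hexp a).mul_const c).mul (hexp (-a))
  simp only [zero_smul, exp_zero, mul_one, one_mul, mul_neg, ← sub_eq_add_neg] at h0
  exact HasDerivAt.comp_sub_const x x (f := fun u : ℝ => exp (u • a) * c * exp (u • -a))
    (by rw [sub_self]; exact h0)

end NormedAlgebra

section CStarRing

variable {E : Type*} [NormedRing E] [StarRing E] [CStarRing E] [NormedAlgebra ℝ E]
  [StarModule ℝ E] [CompleteSpace E]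

theorem norm_exp_smul_mul_mul_exp_smul_neg {a : E} (ha : a ∈ skewAdjoint E) (s : ℝ) (c : E) :
    ‖exp (s • a) * c * exp (s • -a)‖ = ‖c‖ := by
  let _ : NormedAlgebra ℚ E := .restrictScalars ℚ ℝ E
  have hsa : s • a ∈ skewAdjoint E := skewAdjoint.smul_mem s ha
  rw [smul_neg, mul_assoc,
    CStarRing.norm_mem_unitary_mul _ (exp_mem_unitary_of_mem_skewAdjoint hsa),
    CStarRing.norm_mul_mem_unitary _ (exp_mem_unitary_of_mem_skewAdjoint (neg_mem hsa))]

theorem frequently_slope_norm_lt_of_hasDerivWithinAt_commutator {f : ℝ → E} {a b : E} {x r : ℝ}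
    (ha : a ∈ skewAdjoint E) (hf : HasDerivWithinAt f (a * f x - f x * a + b) (Ici x) x)
    (hr : ‖b‖ < r) : ∃ᶠ z in 𝓝[>] x, slope (‖f ·‖) x z < r := by
  set ψ : ℝ → E := fun z => exp ((z - x) • a) * f x * exp ((z - x) • -a)
  have hg : HasDerivWithinAt (fun z => f z - ψ z) b (Ici x) x := by
    have := hf.sub (hasDerivAt_exp_smul_mul_mul_exp_smul_neg a (f x) x).hasDerivWithinAt
    rwa [add_sub_cancel_left] at this
  refine (hg.liminf_right_slope_norm_le hr).mp (eventually_nhdsWithin_of_forall fun z hz h => ?_)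
  have hxz : 0 ≤ (z - x)⁻¹ := inv_nonneg.2 (sub_nonneg.2 (le_of_lt hz))
  have hψ : ‖ψ z‖ = ‖f x‖ := norm_exp_smul_mul_mul_exp_smul_neg ha _ _
  have hfz : ‖f z‖ - ‖f x‖ ≤ ‖f z - ψ z‖ := by
    have := norm_le_insert' (f z) (ψ z)
    linarith
  have hψx : ψ x = f x := by simp [ψ]
  rw [hψx, sub_self, norm_zero, sub_zero] at h
  rw [slope_def_field, div_eq_inv_mul]
  exact (mul_le_mul_of_nonneg_left hfz hxz).trans_lt h

theorem norm_le_add_integral_of_hasDerivWithinAt_commutator_of_le {I : Set ℝ}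
    (hI : I.OrdConnected) {X B f : ℝ → E} (hX : ∀ t ∈ I, X t ∈ skewAdjoint E)
    (hB : ContinuousOn B I) (hf : ∀ t ∈ I, HasDerivWithinAt f (X t * f t - f t * X t + B t) I t)
    {a b : ℝ} (ha : a ∈ I) (hb : b ∈ I) (hab : a ≤ b) :
    ‖f b‖ ≤ ‖f a‖ + ∫ s in a..b, ‖B s‖ := by
  have hsub : Icc a b ⊆ I := hI.out ha hb
  have hfc : ContinuousOn f (Icc a b) := fun t ht =>
    (hf t (hsub ht)).continuousWithinAt.mono hsub
  refine image_le_add_integral_of_liminf_slope_right_le hab hfc.norm (hB.mono hsub).norm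
    fun x hx r hr => ?_
  have hxI : x ∈ I := hsub (Ico_subset_Icc_self hx)
  have hIx : I ∈ 𝓝[≥] x := mem_of_superset (Icc_mem_nhdsGE hx.2) (hI.out hxI hb)
  exact frequently_slope_norm_lt_of_hasDerivWithinAt_commutator (hX x hxI)
    ((hf x hxI).mono_of_mem_nhdsWithin hIx) hr

theorem norm_le_add_integral_of_hasDerivWithinAt_commutator {I : Set ℝ} (hI : I.OrdConnected)
    {X B f : ℝ → E} (hX : ∀ t ∈ I, X t ∈ skewAdjoint E) (hB : ContinuousOn B I)
    (hf : ∀ t ∈ I, HasDerivWithinAt f (X t * f t - f t * X t + B t) I t)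
    {t₀ t : ℝ} (ht₀ : t₀ ∈ I) (ht : t ∈ I) :
    ‖f t‖ ≤ ‖f t₀‖ + ∫ s in (min t t₀)..(max t t₀), ‖B s‖ := by
  rcases le_total t₀ t with h | h
  · rw [min_eq_right h, max_eq_left h]
    exact norm_le_add_integral_of_hasDerivWithinAt_commutator_of_le hI hX hB hf ht₀ ht h
  · rw [min_eq_left h, max_eq_right h]
    set c := t + t₀
    have key := norm_le_add_integral_of_hasDerivWithinAt_commutator_of_le
      (hI.preimage_anti fun _ _ h => sub_le_sub_left h c) (X := fun s => -X (c - s))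
      (B := fun s => -B (c - s)) (f := fun s => f (c - s)) (fun s hs => neg_mem (hX _ hs))
      ((hB.comp (continuous_const.sub continuous_id).continuousOn fun _ hs => hs).neg)
      (fun s hs => hasDerivWithinAt_comp_const_sub_of_commutator (hf _ hs))
      (a := t) (b := t₀) (by simpa [c]) (by simpa [c]) h
    simp only [norm_neg] at key
    rwa [intervalIntegral.integral_comp_sub_left (fun s => ‖B s‖), add_sub_cancel_left,
      add_sub_cancel_right] at key

end CStarRing

open MeasureTheory in
theorem norm_bound_operator_ode_general
    {H : Type*} [NormedAddCommGroup H] [InnerProductSpace ℂ H] [CompleteSpace H]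
    (I : Set ℝ) (hI : I.OrdConnected)
    (A B : ℝ → H →L[ℂ] H)
    (hBcont : ContinuousOn B I)
    (hAsa : ∀ t ∈ I, IsSelfAdjoint (A t))
    (t₀ : ℝ) (ht₀ : t₀ ∈ I)
    (f : ℝ → H →L[ℂ] H)
    (hfode : ∀ t ∈ I,
      HasDerivWithinAt f (Complex.I • (A t ∘L f t - f t ∘L A t) + B t) I t)
    (t : ℝ) (ht : t ∈ I) :
    ‖f t‖ ≤ ‖f t₀‖ + ∫ s in (min t t₀)..(max t t₀), ‖B s‖ := by
  refine norm_le_add_integral_of_hasDerivWithinAt_commutator hI (X := fun s => Complex.I • A s)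
    (fun s hs => (hAsa s hs).smul_mem_skewAdjoint Complex.conj_I) hBcont (fun s hs => ?_) ht₀ ht
  have hcomm : Complex.I • A s * f s - f s * (Complex.I • A s) =
      Complex.I • (A s ∘L f s - f s ∘L A s) := by
    rw [smul_mul_assoc, mul_smul_comm, ← smul_sub]
    rfl
  simpa only [hcomm] using hfode s hs

open MeasureTheory in
/-- norm bound for operator-valued ODEs. If `f' = i[A(t), f] + B(t)` on an
interval `I` with `A(t)` self-adjoint, then
`‖f(t)‖ ≤ ‖f(t₀)‖ + ∫_{min t t₀}^{max t t₀} ‖B(s)‖ ds`. -/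
theorem norm_bound_operator_ode
    {H : Type*} [NormedAddCommGroup H] [InnerProductSpace ℂ H] [CompleteSpace H]
    (I : Set ℝ) (hI : I.OrdConnected)
    (A B : ℝ → H →L[ℂ] H)
    (hAcont : ContinuousOn A I) (hBcont : ContinuousOn B I)
    (hAsa : ∀ t ∈ I, IsSelfAdjoint (A t))
    (t₀ : ℝ) (ht₀ : t₀ ∈ I)
    (f₀ : H →L[ℂ] H) (f : ℝ → H →L[ℂ] H)
    (hfode : ∀ t ∈ I,
      HasDerivWithinAt f (Complex.I • (A t ∘L f t - f t ∘L A t) + B t) I t)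
    (hfinit : f t₀ = f₀)
    (t : ℝ) (ht : t ∈ I) :
    ‖f t‖ ≤ ‖f t₀‖ + ∫ s in (min t t₀)..(max t t₀), ‖B s‖ :=
  norm_bound_operator_ode_general I hI A B hBcont hAsa t₀ ht₀ f hfode t ht
end

section
/- Intersection property of the conditional expectations: for any finite Λ ⊆ Γ and any X, Y ⊆ Λ, one has 𝔼_X^Λ ∘ 𝔼_Y^Λ = 𝔼_{X∩Y}^Λ (as linear maps on 𝔄_Λ). -/
open scoped Classical

/-- The single-site unitaries `u_x^(0) = 1`, `u_x^(1) = a_x* + a_x`, `u_x^(2) = a_x* − a_x`,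
`u_x^(3) = 1 − 2 a_x* a_x`. -/
def uFactor {Γ A : Type*} [Ring A] [StarRing A] (a : Γ → A) (k : Fin 4) (x : Γ) : A :=
  match k with
  | 0 => 1
  | 1 => star (a x) + a x
  | 2 => star (a x) - a x
  | 3 => 1 - 2 * (star (a x) * a x)

/-- The unitary `u(α) = u_{x_1}^{(α(x_1))} ⋯ u_{x_n}^{(α(x_n))}` along the enumeration `l`
of `Λ ∖ X`. -/
def uProd {Γ A : Type*} [Ring A] [StarRing A] (a : Γ → A) (l : List Γ)
    (α : Fin l.length → Fin 4) : A :=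
  (List.ofFn fun i => uFactor a (α i) (l.get i)).prod

/-- The conditional expectation `𝔼_X^Λ(B) = 4^{−|Λ∖X|} ∑_{α} u(α)* B u(α)`, where `l` is
an enumeration of `Λ ∖ X`. -/
noncomputable def condExp {Γ A : Type*} [Ring A] [StarRing A] [Algebra ℂ A] (a : Γ → A)
    (l : List Γ) (B : A) : A :=
  ((4 : ℂ) ^ l.length)⁻¹ • ∑ α : Fin l.length → Fin 4, star (uProd a l α) * B * uProd a l α

/-!
Write `S_x B = ∑ₖ (u_x^(k))* B u_x^(k)`. Then `𝔼_X^Λ` is the composite of the single-site maps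
`E_x = S_x / 4` over `x ∈ Λ ∖ X`. Up to signs, which conjugation does not see,
`u_x^(j) u_x^(k) = ± u_x^(j xor k)` (the `u_x^(k)` represent the Klein four-group projectively)
and unitaries at distinct sites commute; hence every `E_x` is idempotent and the `E_x` commute.
A composite of commuting idempotents only depends on the set of sites it runs over, and
`𝔼_X^Λ ∘ 𝔼_Y^Λ` runs over `(Λ ∖ Y) ∪ (Λ ∖ X) = Λ ∖ (X ∩ Y)`.
-/

section ConjSum

variable {ι κ A : Type*} [Fintype ι] [Fintype κ] [Ring A] [StarRing A]

def conjSum (u : ι → A) (B : A) : A :=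
  ∑ k, star (u k) * B * u k

lemma star_mul_mul_of_eq_or_eq_neg {v w : A} (h : w = v ∨ w = -v) (B : A) :
    star w * B * w = star v * B * v := by
  rcases h with rfl | rfl <;> simp

lemma conjSum_comp_equiv (u : ι → A) (e : κ ≃ ι) (B : A) :
    conjSum (u ∘ e) B = conjSum u B :=
  e.sum_comp fun k => star (u k) * B * u k

lemma conjSum_smul {R : Type*} [CommSemiring R] [Algebra R A] (u : ι → A) (c : R) (B : A) :
    conjSum u (c • B) = c • conjSum u B := by
  simp only [conjSum, Finset.smul_sum, mul_smul_comm, smul_mul_assoc]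

lemma conjSum_mul (u : ι → A) (v : κ → A) (B : A) :
    conjSum (fun p : ι × κ => u p.1 * v p.2) B = conjSum v (conjSum u B) := by
  simp only [conjSum, Fintype.sum_prod_type, Finset.mul_sum, Finset.sum_mul, star_mul, mul_assoc]
  exact Finset.sum_comm

lemma conjSum_conjSum_self {m : ι → ι → ι} (hm : ∀ j, (m j).Bijective) (u : ι → A)
    (hu : ∀ j k, u j * u k = u (m j k) ∨ u j * u k = -u (m j k)) (B : A) :
    conjSum u (conjSum u B) = Fintype.card ι • conjSum u B := by
  rw [← conjSum_mul, conjSum, Fintype.sum_prod_type]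
  calc ∑ j, ∑ k, star (u j * u k) * B * (u j * u k)
      = ∑ j : ι, ∑ k, star (u (m j k)) * B * u (m j k) := by
        simp only [star_mul_mul_of_eq_or_eq_neg (hu _ _)]
    _ = ∑ j : ι, conjSum u B := by
        refine Finset.sum_congr rfl fun j _ => ?_
        exact Fintype.sum_bijective _ (hm j) _ _ fun _ => rfl
    _ = Fintype.card ι • conjSum u B := by simp

lemma conjSum_comm (u : ι → A) (v : κ → A)
    (h : ∀ j k, u j * v k = v k * u j ∨ u j * v k = -(v k * u j)) (B : A) :
    conjSum u (conjSum v B) = conjSum v (conjSum u B) := by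
  rw [← conjSum_mul, ← conjSum_mul, conjSum, conjSum, ← (Equiv.prodComm ι κ).sum_comp]
  exact Finset.sum_congr rfl fun p _ => (star_mul_mul_of_eq_or_eq_neg (h p.1 p.2) B).symm

end ConjSum

namespace List

variable {ι M : Type*} [DecidableEq ι] (f : ι → M → M)
  (idem : ∀ x b, f x (f x b) = f x b) (comm : ∀ x y b, f x (f y b) = f y (f x b))
include idem comm

lemma foldl_eq_foldl_dedup (l : List ι) (b : M) :
    l.foldl (fun b x => f x b) b = l.dedup.foldl (fun b x => f x b) b := by
  have : RightCommutative fun b x => f x b := ⟨fun b x y => comm y x b⟩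
  induction l generalizing b with
  | nil => rfl
  | cons x l ih =>
    by_cases hx : x ∈ l
    · have hperm := perm_cons_erase hx
      rw [dedup_cons_of_mem hx, foldl_cons, ← ih, hperm.foldl_eq, hperm.foldl_eq]
      simp only [foldl_cons, idem]
    · rw [dedup_cons_of_notMem hx, foldl_cons, foldl_cons, ih]

lemma foldl_eq_of_toFinset_eq {l₁ l₂ : List ι} (h : l₁.toFinset = l₂.toFinset) (b : M) :
    l₁.foldl (fun b x => f x b) b = l₂.foldl (fun b x => f x b) b := by
  have : RightCommutative fun b x => f x b := ⟨fun b x y => comm y x b⟩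
  rw [foldl_eq_foldl_dedup f idem comm, foldl_eq_foldl_dedup f idem comm l₂]
  exact (toFinset_eq_iff_perm_dedup.mp h).foldl_eq b

end List

section CAR

variable {Γ A : Type*} [Ring A] [StarRing A] {a : Γ → A}

lemma IsCAR.mul_self [Algebra ℂ A] (h : IsCAR a) (x : Γ) : a x * a x = 0 := by
  have h2 : (2 : ℂ) • (a x * a x) = 0 := by rw [two_smul]; exact h.1 x x
  exact (smul_eq_zero.mp h2).resolve_left two_ne_zero

lemma IsCAR.star_mul_star_self [Algebra ℂ A] (h : IsCAR a) (x : Γ) :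
    star (a x) * star (a x) = 0 := by
  simpa [star_mul] using congrArg star (h.mul_self x)

lemma IsCAR.mul_star_self (h : IsCAR a) (x : Γ) : a x * star (a x) = 1 - star (a x) * a x :=
  eq_sub_of_add_eq (by simpa using h.2.2 x x)

lemma uFactor_mul_uFactor [Algebra ℂ A] (h : IsCAR a) (x : Γ) (j k : Fin 4) :
    uFactor a j x * uFactor a k x = uFactor a (j ^^^ k) x ∨
    uFactor a j x * uFactor a k x = -uFactor a (j ^^^ k) x := by
  -- rewrite rules bringing every monomial in `a x`, `star (a x)` into normal order
  have h2 : ∀ w, star (a x) * (star (a x) * w) = 0 := fun w => by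
    rw [← mul_assoc, h.star_mul_star_self, zero_mul]
  have h3 : ∀ w, a x * (star (a x) * w) = w - star (a x) * (a x * w) := fun w => by
    rw [← mul_assoc, h.mul_star_self, sub_mul, one_mul, mul_assoc]
  fin_cases j <;> fin_cases k <;>
    simp only [uFactor, Fin.isValue, Fin.reduceFinMk, Fin.mk_one, Fin.zero_eta, Fin.reduceXor,
      Fin.xor_zero, Fin.xor_self, mul_add, add_mul, mul_sub, sub_mul, two_mul, one_mul,
      mul_one, mul_zero, mul_assoc, true_or, h.mul_self, h.star_mul_star_self, h.mul_star_self,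
      h2, h3] <;>
    first | (left; abel1) | (right; abel1)

lemma uFactor_mul_uFactor_of_ne (h : IsCAR a) {x y : Γ} (hxy : x ≠ y) (j k : Fin 4) :
    uFactor a j x * uFactor a k y = uFactor a k y * uFactor a j x ∨
    uFactor a j x * uFactor a k y = -(uFactor a k y * uFactor a j x) := by
  -- rewrite rules moving every factor at `y` to the left of every factor at `x`
  have anti : ∀ p q : A, p * q + q * p = 0 →
      p * q = -(q * p) ∧ ∀ w, p * (q * w) = -(q * (p * w)) :=
    fun p q hpq => ⟨eq_neg_of_add_eq_zero_left hpq, fun w => by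
      rw [← mul_assoc, eq_neg_of_add_eq_zero_left hpq, neg_mul, mul_assoc]⟩
  obtain ⟨h1, -⟩ := anti _ _ (h.1 x y)
  obtain ⟨h2, h2'⟩ := anti _ _ (h.2.1 x y)
  obtain ⟨h3, h3'⟩ := anti (a x) (star (a y)) (by simpa [hxy] using h.2.2 x y)
  obtain ⟨h4, h4'⟩ := anti (star (a x)) (a y) (by simpa [hxy.symm, add_comm] using h.2.2 y x)
  fin_cases j <;> fin_cases k <;>
    simp only [uFactor, mul_add, add_mul, mul_sub, sub_mul, two_mul, one_mul, mul_one, mul_neg,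
      neg_neg, mul_assoc, true_or, h1, h2, h2', h3, h3', h4, h4'] <;>
    first | (left; abel1) | (right; abel1)

lemma uProd_cons (x : Γ) (l : List Γ) (k : Fin 4) (β : Fin l.length → Fin 4) :
    uProd a (x :: l) (Fin.cons k β) = uFactor a k x * uProd a l β := by
  simp [uProd, List.ofFn_succ]

lemma conjSum_uProd_cons (x : Γ) (l : List Γ) (B : A) :
    conjSum (uProd a (x :: l)) B = conjSum (uProd a l) (conjSum (uFactor a · x) B) := by
  rw [← conjSum_mul, ← conjSum_comp_equiv (uProd a (x :: l)) (Fin.consEquiv fun _ => Fin 4)]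
  congr 1
  funext p
  exact uProd_cons x l p.1 p.2

variable [Algebra ℂ A]

noncomputable def siteCondExp (a : Γ → A) (x : Γ) (B : A) : A :=
  (4 : ℂ)⁻¹ • conjSum (uFactor a · x) B

lemma siteCondExp_siteCondExp_self (h : IsCAR a) (x : Γ) (B : A) :
    siteCondExp a x (siteCondExp a x B) = siteCondExp a x B := by
  have hxor : ∀ j : Fin 4, Function.Bijective (j ^^^ ·) := by decide
  rw [siteCondExp, siteCondExp, conjSum_smul,
    conjSum_conjSum_self hxor _ (uFactor_mul_uFactor h x), Fintype.card_fin,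
    ← Nat.cast_smul_eq_nsmul ℂ, smul_smul, smul_smul]
  norm_num

lemma siteCondExp_comm (h : IsCAR a) (x y : Γ) (B : A) :
    siteCondExp a x (siteCondExp a y B) = siteCondExp a y (siteCondExp a x B) := by
  rcases eq_or_ne x y with rfl | hxy
  · rfl
  simp only [siteCondExp, conjSum_smul, conjSum_comm _ _ (uFactor_mul_uFactor_of_ne h hxy)]

lemma condExp_nil (B : A) : condExp a [] B = B := by
  simp [condExp, uProd]

lemma condExp_cons (x : Γ) (l : List Γ) (B : A) :
    condExp a (x :: l) B = condExp a l (siteCondExp a x B) := by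
  change ((4 : ℂ) ^ (l.length + 1))⁻¹ • conjSum (uProd a (x :: l)) B =
    ((4 : ℂ) ^ l.length)⁻¹ •
      conjSum (uProd a l) ((4 : ℂ)⁻¹ • conjSum (uFactor a · x) B)
  rw [conjSum_uProd_cons, conjSum_smul, smul_smul, pow_succ, mul_inv]

lemma condExp_eq_foldl (l : List Γ) (B : A) :
    condExp a l B = l.foldl (fun C x => siteCondExp a x C) B := by
  induction l generalizing B with
  | nil => exact condExp_nil B
  | cons x l ih => rw [condExp_cons, ih, List.foldl_cons]

end CAR

theorem condExp_intersection_general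
    {Γ A : Type*} [DecidableEq Γ]
    [NormedRing A] [StarRing A] [NormedAlgebra ℂ A]
    (a : Γ → A) (hCAR : IsCAR a)
    (X Y Λ : Finset Γ)
    (lX : List Γ) (hlXset : lX.toFinset = Λ \ X)
    (lY : List Γ) (hlYset : lY.toFinset = Λ \ Y)
    (lXY : List Γ) (hlXYset : lXY.toFinset = Λ \ (X ∩ Y)) :
    ∀ B ∈ carSpan a Λ, condExp a lX (condExp a lY B) = condExp a lXY B := by
  intro B _
  have hsites : (lY ++ lX).toFinset = lXY.toFinset := by
    rw [List.toFinset_append, hlXset, hlYset, hlXYset, Finset.sdiff_inter_distrib_right,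
      Finset.union_comm]
  simp only [condExp_eq_foldl, ← List.foldl_append]
  exact List.foldl_eq_of_toFinset_eq (siteCondExp a) (siteCondExp_siteCondExp_self hCAR)
    (siteCondExp_comm hCAR) hsites B

/-- intersection property of the conditional expectations:
`𝔼_X^Λ ∘ 𝔼_Y^Λ = 𝔼_{X∩Y}^Λ` on `𝔄_Λ`. -/
theorem condExp_intersection
    {Γ A : Type*} [DecidableEq Γ]
    [NormedRing A] [StarRing A] [CStarRing A] [NormedAlgebra ℂ A]
    (a : Γ → A) (hCAR : IsCAR a)
    (X Y Λ : Finset Γ) (hX : X ⊆ Λ) (hY : Y ⊆ Λ)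
    (lX : List Γ) (hlX : lX.Nodup) (hlXset : lX.toFinset = Λ \ X)
    (lY : List Γ) (hlY : lY.Nodup) (hlYset : lY.toFinset = Λ \ Y)
    (lXY : List Γ) (hlXY : lXY.Nodup) (hlXYset : lXY.toFinset = Λ \ (X ∩ Y)) :
    ∀ B ∈ carSpan a Λ, condExp a lX (condExp a lY B) = condExp a lXY B :=
  condExp_intersection_general a hCAR X Y Λ lX hlXset lY hlYset lXY hlXYset
end
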